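/- arXiv:cs/9810018 — 5 statements merged into one kernel-verified Lean document; each statement's English description precedes it below -/
import Mathlib

section
/- Given a linear equality constraint a_1 x_1 + ... + a_p x_p - a_{p+1} x_{p+1} - ... - a_n x_n = b over real variables with a_i > 0 for all i, and real interval domains x_i ∈ [l_i, h_i], define for j ≤ p: α_j = (b - Σ_{i≤p, i≠j} a_i l_i + Σ_{i>p} a_i h_i)/a_j and γ_j = (b - Σ_{i≤p, i≠j} a_i h_i + Σ_{i>p} a_i l_i)/a_j, and for j > p: β_j = (-b + Σ_{i≤p} a_i l_i - Σ_{i>p, i≠j} a_i h_i)/a_j and δ_j = (-b + Σ_{i≤p} a_i h_i - Σ_{i>p, i≠j} a_i l_i)/a_j. Then every solution of the constraint lying in the box Π[l_i, h_i] also lies in the reduced box where for j ≤ p the interval is [max(l_j, γ_j), min(h_j, α_j)] and for j > p it is [max(l_j, β_j), min(h_j, δ_j)]. -/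
/-! Solving the equation for `a j * d j` and bounding every other term by the endpoints of its
interval gives both bounds; the constraints on the negatively occurring variables are those on the
positive ones for the negated equation. -/

open Finset

section

variable {ι K : Type*} [DecidableEq ι] [Field K] [LinearOrder K] [IsStrictOrderedRing K]
  {a l h d : ι → K} {s t : Finset ι} {b : K} {j : ι}

theorem max_le_and_le_min_of_sum_sub_sum_eq (ha : ∀ i, 0 < a i)
    (hdom : ∀ i, l i ≤ d i ∧ d i ≤ h i)
    (heq : ∑ i ∈ s, a i * d i - ∑ i ∈ t, a i * d i = b) (hj : j ∈ s) :
    max (l j) ((b - ∑ i ∈ s.erase j, a i * h i + ∑ i ∈ t, a i * l i) / a j) ≤ d j ∧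
      d j ≤ min (h j) ((b - ∑ i ∈ s.erase j, a i * l i + ∑ i ∈ t, a i * h i) / a j) := by
  have hsolve : a j * d j = b - ∑ i ∈ s.erase j, a i * d i + ∑ i ∈ t, a i * d i := by
    rw [← heq, ← add_sum_erase s _ hj]
    ring
  have lower (u : Finset ι) : ∑ i ∈ u, a i * l i ≤ ∑ i ∈ u, a i * d i := by
    gcongr with i
    exacts [(ha i).le, (hdom i).1]
  have upper (u : Finset ι) : ∑ i ∈ u, a i * d i ≤ ∑ i ∈ u, a i * h i := by
    gcongr with i
    exacts [(ha i).le, (hdom i).2]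
  constructor
  · refine max_le (hdom j).1 ((div_le_iff₀' (ha j)).2 ?_)
    linarith [upper (s.erase j), lower t]
  · refine le_min (hdom j).2 ((le_div_iff₀' (ha j)).2 ?_)
    linarith [lower (s.erase j), upper t]

end

theorem rlinear_equality_reduction_general
    (n : ℕ) (a l h : Fin n → ℝ) (b : ℝ)
    (ha : ∀ i, 0 < a i)
    (pos neg : Finset (Fin n))
    (d : Fin n → ℝ)
    (hdom : ∀ i, l i ≤ d i ∧ d i ≤ h i)
    (heq : ∑ i ∈ pos, a i * d i - ∑ i ∈ neg, a i * d i = b) :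
    (∀ j ∈ pos,
      max (l j) ((b - ∑ i ∈ pos.erase j, a i * h i + ∑ i ∈ neg, a i * l i) / a j) ≤ d j ∧
      d j ≤ min (h j) ((b - ∑ i ∈ pos.erase j, a i * l i + ∑ i ∈ neg, a i * h i) / a j)) ∧
    (∀ j ∈ neg,
      max (l j) ((-b + ∑ i ∈ pos, a i * l i - ∑ i ∈ neg.erase j, a i * h i) / a j) ≤ d j ∧
      d j ≤ min (h j) ((-b + ∑ i ∈ pos, a i * h i - ∑ i ∈ neg.erase j, a i * l i) / a j)) := by
  refine ⟨fun j hj => max_le_and_le_min_of_sum_sub_sum_eq ha hdom heq hj, fun j hj => ?_⟩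
  have heq' : ∑ i ∈ neg, a i * d i - ∑ i ∈ pos, a i * d i = -b := by
    rw [← heq]
    ring
  simpa only [sub_add_eq_add_sub] using max_le_and_le_min_of_sum_sub_sum_eq ha hdom heq' hj

theorem rlinear_equality_reduction
    (n p : ℕ) (a l h : Fin n → ℝ) (b : ℝ)
    (ha : ∀ i, 0 < a i)
    (pos neg : Finset (Fin n))
    (hpos : pos = Finset.univ.filter (fun i : Fin n => (i : ℕ) < p))
    (hneg : neg = Finset.univ.filter (fun i : Fin n => ¬ (i : ℕ) < p))
    (d : Fin n → ℝ)
    (hdom : ∀ i, l i ≤ d i ∧ d i ≤ h i)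
    (heq : ∑ i ∈ pos, a i * d i - ∑ i ∈ neg, a i * d i = b) :
    (∀ j ∈ pos,
      max (l j) ((b - ∑ i ∈ pos.erase j, a i * h i + ∑ i ∈ neg, a i * l i) / a j) ≤ d j ∧
      d j ≤ min (h j) ((b - ∑ i ∈ pos.erase j, a i * l i + ∑ i ∈ neg, a i * h i) / a j)) ∧
    (∀ j ∈ neg,
      max (l j) ((-b + ∑ i ∈ pos, a i * l i - ∑ i ∈ neg.erase j, a i * h i) / a j) ≤ d j ∧
      d j ≤ min (h j) ((-b + ∑ i ∈ pos, a i * h i - ∑ i ∈ neg.erase j, a i * l i) / a j)) :=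
  rlinear_equality_reduction_general n a l h b ha pos neg d hdom heq
end

section
/- Idempotence of the R-LINEAR EQUALITY rule for a single constraint: applying the R-LINEAR EQUALITY reduction to a single linear equality over real intervals, and then applying it a second time to the resulting intervals, yields the same intervals as after the first application (provided the first application does not yield an empty interval). -/
open Finset

/-- The lower bounds produced by one application of the ℝ-LINEAR EQUALITY rule. -/
noncomputable def reduceL (n p : ℕ) (a : Fin n → ℝ) (b : ℝ) (l h : Fin n → ℝ) : Fin n → ℝ :=
  fun j =>
    if (j : ℕ) < p then
      max (l j)
        ((b - ∑ i ∈ (Finset.univ.filter (fun i : Fin n => (i : ℕ) < p)).erase j, a i * h i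
            + ∑ i ∈ Finset.univ.filter (fun i : Fin n => ¬ (i : ℕ) < p), a i * l i) / a j)
    else
      max (l j)
        ((-b + ∑ i ∈ Finset.univ.filter (fun i : Fin n => (i : ℕ) < p), a i * l i
             - ∑ i ∈ (Finset.univ.filter (fun i : Fin n => ¬ (i : ℕ) < p)).erase j, a i * h i) / a j)

/-- The upper bounds produced by one application of the ℝ-LINEAR EQUALITY rule. -/
noncomputable def reduceH (n p : ℕ) (a : Fin n → ℝ) (b : ℝ) (l h : Fin n → ℝ) : Fin n → ℝ :=
  fun j =>
    if (j : ℕ) < p then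
      min (h j)
        ((b - ∑ i ∈ (Finset.univ.filter (fun i : Fin n => (i : ℕ) < p)).erase j, a i * l i
            + ∑ i ∈ Finset.univ.filter (fun i : Fin n => ¬ (i : ℕ) < p), a i * h i) / a j)
    else
      min (h j)
        ((-b + ∑ i ∈ Finset.univ.filter (fun i : Fin n => (i : ℕ) < p), a i * h i
             - ∑ i ∈ (Finset.univ.filter (fun i : Fin n => ¬ (i : ℕ) < p)).erase j, a i * l i) / a j)

/-!
After the substitution `yᵢ = aᵢxᵢ` (`i < p`), `yᵢ = -aᵢxᵢ` (`p ≤ i`) the constraint reads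
`∑ yᵢ = b` with `yᵢ ∈ [mᵢ, Mᵢ]`, and the rule becomes `mⱼ' = max mⱼ (b - ∑_{i≠j} Mᵢ)`,
`Mⱼ' = min Mⱼ (b - ∑_{i≠j} mᵢ)`. If the new intervals are nonempty, the new lower bounds are
already implied by the new upper bounds: either no `Mᵢ` with `i ≠ j` was cut, and the sum is
unchanged, or some `Mₖ'` equals `b - ∑_{i≠k} mᵢ`, and then, as `Mᵢ' ≥ mᵢ`, we get
`b - ∑_{i≠j} Mᵢ' ≤ mⱼ`. Upper bounds follow by negating everything.
-/

section SumConstraint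

variable {ι : Type*} [Fintype ι] [DecidableEq ι]

noncomputable def sumEqLower (b : ℝ) (m M : ι → ℝ) (j : ι) : ℝ :=
  max (m j) (b - ∑ i ∈ univ.erase j, M i)

noncomputable def sumEqUpper (b : ℝ) (m M : ι → ℝ) (j : ι) : ℝ :=
  min (M j) (b - ∑ i ∈ univ.erase j, m i)

theorem sumEqLower_neg (b : ℝ) (m M : ι → ℝ) :
    sumEqLower (-b) (-M) (-m) = -sumEqUpper b m M := by
  funext j
  simp only [sumEqLower, sumEqUpper, Pi.neg_apply, sum_neg_distrib, ← max_neg_neg]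
  ring_nf

theorem sumEqUpper_neg (b : ℝ) (m M : ι → ℝ) :
    sumEqUpper (-b) (-M) (-m) = -sumEqLower b m M := by
  funext j
  simp only [sumEqLower, sumEqUpper, Pi.neg_apply, sum_neg_distrib, ← min_neg_neg]
  ring_nf

theorem sub_sum_erase_sumEqUpper_le {b : ℝ} {m M : ι → ℝ}
    (hne : ∀ i, sumEqLower b m M i ≤ sumEqUpper b m M i) (j : ι) :
    b - ∑ i ∈ univ.erase j, sumEqUpper b m M i ≤ sumEqLower b m M j := by
  by_cases hcut : ∃ k ∈ univ.erase j, sumEqUpper b m M k = b - ∑ i ∈ univ.erase k, m i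
  · obtain ⟨k, hk, hk_eq⟩ := hcut
    have hm_le : ∀ i, m i ≤ sumEqUpper b m M i := fun i => (le_max_left _ _).trans (hne i)
    have hsingle : sumEqUpper b m M k - m k ≤ ∑ i ∈ univ.erase j, (sumEqUpper b m M i - m i) :=
      single_le_sum (fun i _ => sub_nonneg.2 (hm_le i)) hk
    rw [sum_sub_distrib, sum_erase_eq_sub (mem_univ j), sum_erase_eq_sub (mem_univ j), hk_eq,
      sum_erase_eq_sub (mem_univ k)] at hsingle
    rw [sum_erase_eq_sub (mem_univ j)]
    have hmj : m j ≤ sumEqLower b m M j := le_max_left _ _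
    linarith
  · push Not at hcut
    have huncut : ∀ i ∈ univ.erase j, sumEqUpper b m M i = M i := fun i hi =>
      (min_choice _ _).resolve_right (hcut i hi)
    rw [sum_congr rfl huncut]
    exact le_max_right _ _

theorem sumEqLower_idem {b : ℝ} {m M : ι → ℝ}
    (hne : ∀ i, sumEqLower b m M i ≤ sumEqUpper b m M i) :
    sumEqLower b (sumEqLower b m M) (sumEqUpper b m M) = sumEqLower b m M :=
  funext fun j => max_eq_left (sub_sum_erase_sumEqUpper_le hne j)

theorem sumEqUpper_idem {b : ℝ} {m M : ι → ℝ}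
    (hne : ∀ i, sumEqLower b m M i ≤ sumEqUpper b m M i) :
    sumEqUpper b (sumEqLower b m M) (sumEqUpper b m M) = sumEqUpper b m M := by
  have hne' : ∀ i, sumEqLower (-b) (-M) (-m) i ≤ sumEqUpper (-b) (-M) (-m) i := by
    simpa [sumEqLower_neg, sumEqUpper_neg] using hne
  have := sumEqLower_idem hne'
  rwa [sumEqLower_neg, sumEqUpper_neg, sumEqLower_neg, neg_inj] at this

end SumConstraint

section SignedBound

variable {n : ℕ} (p : ℕ) (a : Fin n → ℝ)

/-- If `xᵢ ∈ [lᵢ, hᵢ]`, then `±aᵢxᵢ` (sign `+` for `i < p`) lies in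
`[signedBound p a l h i, signedBound p a h l i]`. -/
def signedBound (u v : Fin n → ℝ) (i : Fin n) : ℝ :=
  if (i : ℕ) < p then a i * u i else -(a i * v i)

variable {p a}

theorem sum_erase_signedBound (u v : Fin n → ℝ) (j : Fin n) :
    ∑ i ∈ univ.erase j, signedBound p a u v i =
      ∑ i ∈ (univ.filter fun i : Fin n => (i : ℕ) < p).erase j, a i * u i
        - ∑ i ∈ (univ.filter fun i : Fin n => ¬ (i : ℕ) < p).erase j, a i * v i := by
  simp only [signedBound]
  rw [sum_ite, sum_neg_distrib, filter_erase, filter_erase, sub_eq_add_neg]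

theorem signedBound_le_signedBound_swap {u v : Fin n → ℝ} (ha : ∀ i, 0 ≤ a i)
    (huv : ∀ i, u i ≤ v i) (i : Fin n) : signedBound p a u v i ≤ signedBound p a v u i := by
  unfold signedBound
  split_ifs
  · exact mul_le_mul_of_nonneg_left (huv i) (ha i)
  · exact neg_le_neg (mul_le_mul_of_nonneg_left (huv i) (ha i))

theorem eq_of_signedBound_eq {u v u' v' : Fin n → ℝ} (ha : ∀ i, a i ≠ 0)
    (h₁ : signedBound p a u v = signedBound p a u' v')
    (h₂ : signedBound p a v u = signedBound p a v' u') : u = u' ∧ v = v' := by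
  have hpt : ∀ i, u i = u' i ∧ v i = v' i := by
    intro i
    have h₁ := congrFun h₁ i
    have h₂ := congrFun h₂ i
    by_cases hi : (i : ℕ) < p <;> simp only [signedBound, hi, if_true, if_false, neg_inj,
      mul_right_inj' (ha i)] at h₁ h₂
    exacts [⟨h₁, h₂⟩, ⟨h₂, h₁⟩]
  exact ⟨funext fun i => (hpt i).1, funext fun i => (hpt i).2⟩

theorem signedBound_reduceL (b : ℝ) (l h : Fin n → ℝ) (ha : ∀ i, 0 < a i) :
    signedBound p a (reduceL n p a b l h) (reduceH n p a b l h) =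
      sumEqLower b (signedBound p a l h) (signedBound p a h l) := by
  funext j
  rw [sumEqLower, sum_erase_signedBound]
  simp only [signedBound, reduceL, reduceH]
  by_cases hj : (j : ℕ) < p
  · rw [erase_eq_of_notMem (s := univ.filter fun i : Fin n => ¬ (i : ℕ) < p)
      (fun hmem => (mem_filter.1 hmem).2 hj)]
    simp only [hj, if_true]
    rw [mul_max_of_nonneg _ _ (ha j).le, mul_div_cancel₀ _ (ha j).ne']
    ring_nf
  · rw [erase_eq_of_notMem (s := univ.filter fun i : Fin n => (i : ℕ) < p)
      (fun hmem => hj (mem_filter.1 hmem).2)]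
    simp only [hj, if_false]
    rw [mul_min_of_nonneg _ _ (ha j).le, mul_div_cancel₀ _ (ha j).ne', ← max_neg_neg]
    ring_nf

theorem signedBound_reduceH (b : ℝ) (l h : Fin n → ℝ) (ha : ∀ i, 0 < a i) :
    signedBound p a (reduceH n p a b l h) (reduceL n p a b l h) =
      sumEqUpper b (signedBound p a l h) (signedBound p a h l) := by
  funext j
  rw [sumEqUpper, sum_erase_signedBound]
  simp only [signedBound, reduceL, reduceH]
  by_cases hj : (j : ℕ) < p
  · rw [erase_eq_of_notMem (s := univ.filter fun i : Fin n => ¬ (i : ℕ) < p)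
      (fun hmem => (mem_filter.1 hmem).2 hj)]
    simp only [hj, if_true]
    rw [mul_min_of_nonneg _ _ (ha j).le, mul_div_cancel₀ _ (ha j).ne']
    ring_nf
  · rw [erase_eq_of_notMem (s := univ.filter fun i : Fin n => (i : ℕ) < p)
      (fun hmem => hj (mem_filter.1 hmem).2)]
    simp only [hj, if_false]
    rw [mul_max_of_nonneg _ _ (ha j).le, mul_div_cancel₀ _ (ha j).ne', ← min_neg_neg]
    ring_nf

end SignedBound

theorem rlinear_equality_idempotent
    (n p : ℕ) (a l h : Fin n → ℝ) (b : ℝ)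
    (ha : ∀ i, 0 < a i)
    (hne : ∀ i, reduceL n p a b l h i ≤ reduceH n p a b l h i) :
    reduceL n p a b (reduceL n p a b l h) (reduceH n p a b l h) = reduceL n p a b l h ∧
    reduceH n p a b (reduceL n p a b l h) (reduceH n p a b l h) = reduceH n p a b l h := by
  have hne' : ∀ i, sumEqLower b (signedBound p a l h) (signedBound p a h l) i ≤
      sumEqUpper b (signedBound p a l h) (signedBound p a h l) i := by
    rw [← signedBound_reduceL b l h ha, ← signedBound_reduceH b l h ha]
    exact signedBound_le_signedBound_swap (fun i => (ha i).le) hne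
  apply eq_of_signedBound_eq (p := p) fun i => (ha i).ne'
  · simp only [signedBound_reduceL b _ _ ha, signedBound_reduceH b _ _ ha, sumEqLower_idem hne']
  · simp only [signedBound_reduceL b _ _ ha, signedBound_reduceH b _ _ ha, sumEqUpper_idem hne']
end

section
/- Non-termination example: for the CSP with constraints x = y and x = 2y and real interval domains x ∈ [0,100], y ∈ [0,100], the alternating application of the R-LINEAR EQUALITY rule to the two constraints produces a strictly decreasing infinite sequence of nonempty interval domains; i.e., at every stage, applying the rule to the currently selected constraint strictly shrinks at least one interval and never reaches a fixpoint. -/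
/-- Applying the ℝ-LINEAR EQUALITY rule to `x = y` with domains `x ∈ [0,q.1]`, `y ∈ [0,q.2]`:
both upper bounds become the minimum. -/
noncomputable def stepEq (q : ℝ × ℝ) : ℝ × ℝ := (min q.1 q.2, min q.1 q.2)

/-- Applying the ℝ-LINEAR EQUALITY rule to `x - 2y = 0` with domains `x ∈ [0,q.1]`, `y ∈ [0,q.2]`. -/
noncomputable def stepTwice (q : ℝ × ℝ) : ℝ × ℝ := (min q.1 (2 * q.2), min q.2 (q.1 / 2))

/-- The sequence of pairs of upper bounds of the domains of `x` and `y`, starting from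
`[0,100], [0,100]` and alternating applications of the rule to `x - 2y = 0` and `x = y`. -/
noncomputable def domSeq : ℕ → ℝ × ℝ
  | 0 => (100, 100)
  | k + 1 => if k % 2 = 0 then stepTwice (domSeq k) else stepEq (domSeq k)

lemma domSeq_closed : ∀ k : ℕ,
    domSeq (2 * k) = (100 / 2 ^ k, 100 / 2 ^ k) ∧
    domSeq (2 * k + 1) = (100 / 2 ^ k, 100 / 2 ^ (k + 1)) := by
  intro k
  induction k with
  | zero =>
    constructor
    · simp [domSeq]
    · have : (1 : ℕ) = 0 + 1 := rfl
      rw [show (2 * 0 + 1 : ℕ) = 0 + 1 from rfl]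
      simp [domSeq, stepTwice]
  | succ n ih =>
    obtain ⟨h1, h2⟩ := ih
    have hpos : (0:ℝ) < 100 / 2 ^ n := by positivity
    have heven : domSeq (2 * (n + 1)) = (100 / 2 ^ (n + 1), 100 / 2 ^ (n + 1)) := by
      have : (2 * (n + 1) : ℕ) = (2 * n + 1) + 1 := by ring
      rw [this, domSeq]
      have hmod : (2 * n + 1) % 2 = 1 := by omega
      rw [hmod]
      simp only [h2, stepEq]
      have hle : (100:ℝ) / 2 ^ (n + 1) ≤ 100 / 2 ^ n := by
        apply div_le_div_of_nonneg_left (by norm_num) (by positivity)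
        exact pow_le_pow_right₀ (by norm_num) (by omega)
      simp [min_eq_right hle]
    refine ⟨heven, ?_⟩
    rw [domSeq]
    have hmod : (2 * (n + 1)) % 2 = 0 := by omega
    rw [hmod]
    simp only [heven, stepTwice, if_true]
    have hp : (0:ℝ) < 100 / 2 ^ (n + 1) := by positivity
    refine Prod.ext ?_ ?_ <;> simp only
    · exact min_eq_left (by linarith)
    · rw [min_eq_right (by linarith), pow_succ]
      ring

theorem rlinear_equality_nontermination :
    (∀ k : ℕ, (domSeq (2 * k)).2 = 100 / 2 ^ k) ∧
    (∀ k : ℕ, 0 < (domSeq k).1 ∧ 0 < (domSeq k).2) ∧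
    (∀ k : ℕ, domSeq (k + 1) ≠ domSeq k) := by
  refine ⟨fun k => by rw [(domSeq_closed k).1], ?_, ?_⟩
  · intro k
    rcases Nat.even_or_odd k with ⟨m, hm⟩ | ⟨m, hm⟩
    · rw [show k = 2 * m by omega, (domSeq_closed m).1]
      constructor <;> positivity
    · rw [show k = 2 * m + 1 by omega, (domSeq_closed m).2]
      constructor <;> positivity
  · intro k
    rcases Nat.even_or_odd k with ⟨m, hm⟩ | ⟨m, hm⟩
    · rw [show k = 2 * m by omega, (domSeq_closed m).1, (domSeq_closed m).2]
      intro h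
      have := congrArg Prod.snd h
      simp only at this
      have hp : (0:ℝ) < 100 / 2 ^ m := by positivity
      rw [pow_succ] at this
      have hpm : (0:ℝ) < (2:ℝ) ^ m := by positivity
      field_simp at this
      norm_num at this
    · rw [show k + 1 = 2 * (m + 1) by omega, show k = 2 * m + 1 by omega,
        (domSeq_closed (m+1)).1, (domSeq_closed m).2]
      intro h
      have := congrArg Prod.fst h
      simp only at this
      rw [pow_succ] at this
      have hpm : (0:ℝ) < (2:ℝ) ^ m := by positivity
      field_simp at this
      norm_num at this
end

section
/- The integer LINEAR EQUALITY rule is equivalence preserving: given a linear equality Σ_{i≤p} a_i x_i - Σ_{i>p} a_i x_i = b over integer variables with positive integer coefficients a_i, integer b, and integer interval domains [l_i..h_i], every integer solution in the original box lies in the reduced box where for j ≤ p the interval is [max(l_j, ⌈γ_j⌉) .. min(h_j, ⌊α_j⌋)] and for j > p it is [max(l_j, ⌈β_j⌉) .. min(h_j, ⌊δ_j⌋)], and conversely every integer solution in the reduced box lies in the original box. -/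
/-!
Isolating `x_j` in the equality and bounding every other term by the box confines `a_j x_j` to
`[a_j γ_j, a_j α_j]` for `j ≤ p` (to `[a_j β_j, a_j δ_j]` for `j > p`, after negating the
equality); since `a_j > 0` and `x_j` is an integer, dividing and rounding inwards keeps `x_j`
in the reduced interval. The converse holds because the reduced box lies inside the original.
-/

open Finset

section FloorDiv

variable {K : Type*} [Field K] [LinearOrder K] [IsStrictOrderedRing K] [FloorRing K]

theorem Int.ceil_intCast_div_le_iff {x a d : ℤ} (ha : 0 < a) :
    ⌈(x : K) / (a : K)⌉ ≤ d ↔ x ≤ a * d := by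
  rw [Int.ceil_le, div_le_iff₀ (by exact_mod_cast ha), mul_comm]
  exact_mod_cast Iff.rfl

theorem Int.le_floor_intCast_div_iff {x a d : ℤ} (ha : 0 < a) :
    d ≤ ⌊(x : K) / (a : K)⌋ ↔ a * d ≤ x := by
  rw [Int.le_floor, le_div_iff₀ (by exact_mod_cast ha), mul_comm]
  exact_mod_cast Iff.rfl

theorem max_ceil_div_le_and_le_min_floor_div {l h a d lo hi : ℤ} (hd : l ≤ d ∧ d ≤ h)
    (ha : 0 < a) (hlo : lo ≤ a * d) (hhi : a * d ≤ hi) :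
    max l ⌈(lo : K) / (a : K)⌉ ≤ d ∧ d ≤ min h ⌊(hi : K) / (a : K)⌋ :=
  ⟨max_le hd.1 ((Int.ceil_intCast_div_le_iff ha).2 hlo),
    le_min hd.2 ((Int.le_floor_intCast_div_iff ha).2 hhi)⟩

end FloorDiv

section WeightedSum

variable {ι R : Type*} [CommRing R] [LinearOrder R] [IsStrictOrderedRing R]
  {a l h d : ι → R}

theorem sum_mul_le_sum_mul_of_le {s : Finset ι} (ha : ∀ i, 0 ≤ a i) (hld : ∀ i, l i ≤ d i) :
    ∑ i ∈ s, a i * l i ≤ ∑ i ∈ s, a i * d i :=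
  sum_le_sum fun i _ => mul_le_mul_of_nonneg_left (hld i) (ha i)

theorem mul_mem_bounds_of_sum_sub_sum_eq [DecidableEq ι] {s t : Finset ι} {j : ι} {c : R}
    (hj : j ∈ s)
    (heq : ∑ i ∈ s, a i * d i - ∑ i ∈ t, a i * d i = c) (ha : ∀ i, 0 ≤ a i)
    (hbox : ∀ i, l i ≤ d i ∧ d i ≤ h i) :
    c - ∑ i ∈ s.erase j, a i * h i + ∑ i ∈ t, a i * l i ≤ a j * d j ∧
      a j * d j ≤ c - ∑ i ∈ s.erase j, a i * l i + ∑ i ∈ t, a i * h i := by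
  have hsplit := add_sum_erase s (fun i => a i * d i) hj
  have hs_le := sum_mul_le_sum_mul_of_le (s := s.erase j) ha fun i => (hbox i).2
  have hs_ge := sum_mul_le_sum_mul_of_le (s := s.erase j) ha fun i => (hbox i).1
  have ht_le := sum_mul_le_sum_mul_of_le (s := t) ha fun i => (hbox i).2
  have ht_ge := sum_mul_le_sum_mul_of_le (s := t) ha fun i => (hbox i).1
  constructor <;> linarith

end WeightedSum

theorem linear_equality_equivalence_preserving
    (n p : ℕ) (a l h : Fin n → ℤ) (b : ℤ)
    (ha : ∀ i, 0 < a i)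
    (pos neg : Finset (Fin n))
    (hpos : pos = Finset.univ.filter (fun i : Fin n => (i : ℕ) < p))
    (hneg : neg = Finset.univ.filter (fun i : Fin n => ¬ (i : ℕ) < p)) :
    (∀ d : Fin n → ℤ,
      (∑ i ∈ pos, a i * d i - ∑ i ∈ neg, a i * d i = b) →
      (∀ i, l i ≤ d i ∧ d i ≤ h i) →
      ((∀ j ∈ pos,
          max (l j) ⌈(((b - ∑ i ∈ pos.erase j, a i * h i + ∑ i ∈ neg, a i * l i : ℤ) : ℚ)
            / ((a j : ℤ) : ℚ))⌉ ≤ d j ∧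
          d j ≤ min (h j) ⌊(((b - ∑ i ∈ pos.erase j, a i * l i + ∑ i ∈ neg, a i * h i : ℤ) : ℚ)
            / ((a j : ℤ) : ℚ))⌋) ∧
       (∀ j ∈ neg,
          max (l j) ⌈(((-b + ∑ i ∈ pos, a i * l i - ∑ i ∈ neg.erase j, a i * h i : ℤ) : ℚ)
            / ((a j : ℤ) : ℚ))⌉ ≤ d j ∧
          d j ≤ min (h j) ⌊(((-b + ∑ i ∈ pos, a i * h i - ∑ i ∈ neg.erase j, a i * l i : ℤ) : ℚ)
            / ((a j : ℤ) : ℚ))⌋))) ∧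
    (∀ d : Fin n → ℤ,
      (∑ i ∈ pos, a i * d i - ∑ i ∈ neg, a i * d i = b) →
      ((∀ j ∈ pos,
          max (l j) ⌈(((b - ∑ i ∈ pos.erase j, a i * h i + ∑ i ∈ neg, a i * l i : ℤ) : ℚ)
            / ((a j : ℤ) : ℚ))⌉ ≤ d j ∧
          d j ≤ min (h j) ⌊(((b - ∑ i ∈ pos.erase j, a i * l i + ∑ i ∈ neg, a i * h i : ℤ) : ℚ)
            / ((a j : ℤ) : ℚ))⌋) ∧
       (∀ j ∈ neg,
          max (l j) ⌈(((-b + ∑ i ∈ pos, a i * l i - ∑ i ∈ neg.erase j, a i * h i : ℤ) : ℚ)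
            / ((a j : ℤ) : ℚ))⌉ ≤ d j ∧
          d j ≤ min (h j) ⌊(((-b + ∑ i ∈ pos, a i * h i - ∑ i ∈ neg.erase j, a i * l i : ℤ) : ℚ)
            / ((a j : ℤ) : ℚ))⌋)) →
      (∀ i, l i ≤ d i ∧ d i ≤ h i)) := by
  have ha' : ∀ i, 0 ≤ a i := fun i => (ha i).le
  refine ⟨fun d heq hbox => ⟨fun j hj => ?_, fun j hj => ?_⟩, fun d _ hred i => ?_⟩
  · obtain ⟨hlo, hhi⟩ := mul_mem_bounds_of_sum_sub_sum_eq hj heq ha' hbox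
    exact max_ceil_div_le_and_le_min_floor_div (hbox j) (ha j) hlo hhi
  · have heq' : ∑ i ∈ neg, a i * d i - ∑ i ∈ pos, a i * d i = -b := by linarith
    obtain ⟨hlo, hhi⟩ := mul_mem_bounds_of_sum_sub_sum_eq hj heq' ha' hbox
    exact max_ceil_div_le_and_le_min_floor_div (hbox j) (ha j) (by linarith) (by linarith)
  · have hi : i ∈ pos ∨ i ∈ neg := by
      subst hpos hneg
      simp only [mem_filter, mem_univ, true_and]
      exact em _
    rcases hi with hi | hi
    · exact ⟨le_of_max_le_left (hred.1 i hi).1, le_of_le_min_left (hred.1 i hi).2⟩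
    · exact ⟨le_of_max_le_left (hred.2 i hi).1, le_of_le_min_left (hred.2 i hi).2⟩
end

section
/- Correctness of the LINEAR INEQUALITY reduction rule: given a linear inequality Σ_{i≤p} a_i x_i - Σ_{i>p} a_i x_i ≤ b over integer variables with positive integer coefficients and integer interval domains [l_i..h_i], every integer solution in the original box satisfies, for each positively occurring variable j, x_j ≤ ⌊α_j⌋ where α_j = (b - Σ_{i≤p, i≠j} a_i l_i + Σ_{i>p} a_i h_i)/a_j, and for each negatively occurring variable j, x_j ≥ ⌈β_j⌉ where β_j = (-b + Σ_{i≤p} a_i l_i - Σ_{i>p, i≠j} a_i h_i)/a_j. -/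
/-!
Isolate `x_j` in the inequality: every other term of the sum is bounded, in the direction that
keeps the inequality valid, by its value at the corresponding end of its domain. This leaves
`a_j x_j ≤ a_j α_j` (resp. `a_j β_j ≤ a_j x_j`), and dividing by `a_j > 0` and rounding towards
`x_j` is allowed because `x_j` is an integer. The bound for negatively occurring variables is the
bound for positively occurring ones applied to `-x`, with the two signs swapped.
-/

open Finset

section IsolateTerm

variable {ι R : Type*} [DecidableEq ι] [CommRing R] [LinearOrder R] [IsStrictOrderedRing R]
  {s t : Finset ι} {a l h d : ι → R} {b : R} {j : ι}

theorem mul_le_of_sum_sub_sum_le (ha : ∀ i, 0 ≤ a i)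
    (hl : ∀ i ∈ s, l i ≤ d i) (hh : ∀ i ∈ t, d i ≤ h i) (hj : j ∈ s)
    (hineq : ∑ i ∈ s, a i * d i - ∑ i ∈ t, a i * d i ≤ b) :
    a j * d j ≤ b - ∑ i ∈ s.erase j, a i * l i + ∑ i ∈ t, a i * h i := by
  have hsplit := add_sum_erase s (fun i => a i * d i) hj
  have hlower : ∑ i ∈ s.erase j, a i * l i ≤ ∑ i ∈ s.erase j, a i * d i := by
    gcongr with i hi
    exacts [ha i, hl i (mem_of_mem_erase hi)]
  have hupper : ∑ i ∈ t, a i * d i ≤ ∑ i ∈ t, a i * h i := by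
    gcongr with i hi
    exacts [ha i, hh i hi]
  linarith

theorem le_mul_of_sum_sub_sum_le (ha : ∀ i, 0 ≤ a i)
    (hl : ∀ i ∈ s, l i ≤ d i) (hh : ∀ i ∈ t, d i ≤ h i) (hj : j ∈ t)
    (hineq : ∑ i ∈ s, a i * d i - ∑ i ∈ t, a i * d i ≤ b) :
    -b + ∑ i ∈ s, a i * l i - ∑ i ∈ t.erase j, a i * h i ≤ a j * d j := by
  have hneg := mul_le_of_sum_sub_sum_le (s := t) (t := s) (l := -h) (h := -l) (d := -d) ha
    (fun i hi => neg_le_neg (hh i hi)) (fun i hi => neg_le_neg (hl i hi)) hj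
    (by simpa only [Pi.neg_apply, mul_neg, sum_neg_distrib, neg_sub_neg] using hineq)
  simp only [Pi.neg_apply, mul_neg, sum_neg_distrib] at hneg
  linarith

end IsolateTerm

section RoundDivision

variable {K : Type*} [Field K] [LinearOrder K] [IsStrictOrderedRing K] [FloorRing K]
  {a c z : ℤ}

theorem le_floor_div_of_mul_le (ha : 0 < a) (h : a * z ≤ c) : z ≤ ⌊(c : K) / a⌋ := by
  rw [Int.le_floor, le_div_iff₀ (by exact_mod_cast ha)]
  exact_mod_cast (mul_comm z a ▸ h)

theorem ceil_div_le_of_le_mul (ha : 0 < a) (h : c ≤ a * z) : ⌈(c : K) / a⌉ ≤ z := by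
  rw [Int.ceil_le, div_le_iff₀ (by exact_mod_cast ha)]
  exact_mod_cast (mul_comm z a ▸ h)

end RoundDivision

theorem linear_inequality_reduction_general
    (n : ℕ) (a l h : Fin n → ℤ) (b : ℤ)
    (ha : ∀ i, 0 < a i)
    (pos neg : Finset (Fin n))
    (d : Fin n → ℤ)
    (hdom : ∀ i, l i ≤ d i ∧ d i ≤ h i)
    (hineq : ∑ i ∈ pos, a i * d i - ∑ i ∈ neg, a i * d i ≤ b) :
    (∀ j ∈ pos,
      d j ≤ ⌊(((b - ∑ i ∈ pos.erase j, a i * l i + ∑ i ∈ neg, a i * h i : ℤ) : ℚ)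
              / ((a j : ℤ) : ℚ))⌋) ∧
    (∀ j ∈ neg,
      ⌈(((-b + ∑ i ∈ pos, a i * l i - ∑ i ∈ neg.erase j, a i * h i : ℤ) : ℚ)
              / ((a j : ℤ) : ℚ))⌉ ≤ d j) := by
  have ha' : ∀ i, 0 ≤ a i := fun i => (ha i).le
  have hl : ∀ i ∈ pos, l i ≤ d i := fun i _ => (hdom i).1
  have hh : ∀ i ∈ neg, d i ≤ h i := fun i _ => (hdom i).2
  exact ⟨fun j hj => le_floor_div_of_mul_le (ha j) (mul_le_of_sum_sub_sum_le ha' hl hh hj hineq),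
    fun j hj => ceil_div_le_of_le_mul (ha j) (le_mul_of_sum_sub_sum_le ha' hl hh hj hineq)⟩

theorem linear_inequality_reduction
    (n p : ℕ) (a l h : Fin n → ℤ) (b : ℤ)
    (ha : ∀ i, 0 < a i)
    (pos neg : Finset (Fin n))
    (hpos : pos = Finset.univ.filter (fun i : Fin n => (i : ℕ) < p))
    (hneg : neg = Finset.univ.filter (fun i : Fin n => ¬ (i : ℕ) < p))
    (d : Fin n → ℤ)
    (hdom : ∀ i, l i ≤ d i ∧ d i ≤ h i)
    (hineq : ∑ i ∈ pos, a i * d i - ∑ i ∈ neg, a i * d i ≤ b) :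
    (∀ j ∈ pos,
      d j ≤ ⌊(((b - ∑ i ∈ pos.erase j, a i * l i + ∑ i ∈ neg, a i * h i : ℤ) : ℚ)
              / ((a j : ℤ) : ℚ))⌋) ∧
    (∀ j ∈ neg,
      ⌈(((-b + ∑ i ∈ pos, a i * l i - ∑ i ∈ neg.erase j, a i * h i : ℤ) : ℚ)
              / ((a j : ℤ) : ℚ))⌉ ≤ d j) :=
  linear_inequality_reduction_general n a l h b ha pos neg d hdom hineq
end
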